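/- Let z_1, …, z_N be distinct complex numbers and define for 1 ≤ i, j ≤ N the rational function g_{ij}(z) = ((z - z_j)/(z - z_i)²)·Π_{s≠j} (z - z_s)²/(z_j - z_s)². Then the sum of residues Σ_{p=1}^{N} res_{z_p}( g_{ij} ) = δ_{ij}. -/

import Mathlib

open RatFunc

/-- The residue of a rational function `f` at a finite point `p`:
the coefficient of `(z-p)^{-1}` in the Laurent expansion of `f` at `p`. -/
noncomputable def res (p : ℂ) (f : RatFunc ℂ) : ℂ :=
  (((RatFunc.laurent p f : RatFunc ℂ) : LaurentSeries ℂ)).coeff (-1)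

open Polynomial in
lemma res_algebraMap (p : ℂ) (q : Polynomial ℂ) :
    res p (algebraMap (Polynomial ℂ) (RatFunc ℂ) q) = 0 := by
  rw [res, RatFunc.laurent_algebraMap, ← RatFunc.coePolynomial, ← RatFunc.coe_coe,
    PowerSeries.coeff_coe]
  simp

lemma res_add (p : ℂ) (f g : RatFunc ℂ) : res p (f + g) = res p f + res p g := by
  simp [res, map_add]

lemma X_sub_C_ne_zero' (a : ℂ) : RatFunc.X - RatFunc.C a ≠ 0 := by
  rw [← RatFunc.algebraMap_X, ← RatFunc.algebraMap_C, ← map_sub]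
  exact RatFunc.algebraMap_ne_zero (Polynomial.X_sub_C_ne_zero a)

lemma coe_inv' (f : RatFunc ℂ) :
    ((f⁻¹ : RatFunc ℂ) : LaurentSeries ℂ) = (f : LaurentSeries ℂ)⁻¹ := by
  rw [inv_eq_one_div, map_div₀, map_one, one_div]

lemma coe_C' (r : ℂ) : ((RatFunc.C r : RatFunc ℂ) : LaurentSeries ℂ) = HahnSeries.C r := by
  rw [← RatFunc.algebraMap_C, ← IsScalarTower.algebraMap_apply,
    Polynomial.algebraMap_hahnSeries_apply]
  simp

open Polynomial in
lemma res_inv_X_sub_C (p a : ℂ) :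
    res p ((RatFunc.X - RatFunc.C a)⁻¹) = if p = a then 1 else 0 := by
  rw [res, map_inv₀, map_sub, RatFunc.laurent_X, RatFunc.laurent_C, coe_inv']
  by_cases h : p = a
  · subst h
    simp only [add_sub_cancel_right, if_pos rfl, RatFunc.coe_X]
    rw [inv_eq_of_mul_eq_one_left (a := (HahnSeries.single (-1 : ℤ) (1 : ℂ) : LaurentSeries ℂ))
      (b := HahnSeries.single (1 : ℤ) (1 : ℂ)) (by rw [HahnSeries.single_mul_single]; simp)]
    simp
  · rw [if_neg h]
    have hc : (p - a) ≠ 0 := sub_ne_zero.mpr h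
    set P : PowerSeries ℂ := PowerSeries.X + PowerSeries.C (p - a) with hP
    have hconst : PowerSeries.constantCoeff P ≠ 0 := by simp [hP, hc]
    have hcoe : ((RatFunc.X + RatFunc.C p - RatFunc.C a : RatFunc ℂ) : LaurentSeries ℂ)
        = (P : LaurentSeries ℂ) := by
      rw [hP, PowerSeries.coe_add, PowerSeries.coe_C, PowerSeries.coe_X,
        map_sub, map_add, RatFunc.coe_X, coe_C', coe_C',
        map_sub]
      simp only [HahnSeries.C_apply]
      abel
    rw [hcoe]
    have hunit : (P : LaurentSeries ℂ) * ((P⁻¹ : PowerSeries ℂ) : LaurentSeries ℂ) = 1 := by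
      rw [← PowerSeries.coe_mul, PowerSeries.mul_inv_cancel _ hconst, PowerSeries.coe_one]
    rw [inv_eq_of_mul_eq_one_right hunit, PowerSeries.coeff_coe]
    simp

lemma sum_res_poly_add_inv {N : ℕ} (z : Fin N → ℂ) (hz : Function.Injective z) (i : Fin N)
    (Q : Polynomial ℂ) :
    ∑ p : Fin N, res (z p) (algebraMap (Polynomial ℂ) (RatFunc ℂ) Q +
      (RatFunc.X - RatFunc.C (z i))⁻¹) = 1 := by
  have : ∀ p : Fin N, res (z p) (algebraMap (Polynomial ℂ) (RatFunc ℂ) Q +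
      (RatFunc.X - RatFunc.C (z i))⁻¹) = if p = i then 1 else 0 := by
    intro p
    rw [res_add, res_algebraMap, res_inv_X_sub_C, zero_add]
    simp [hz.eq_iff]
  simp only [this]
  simp


/-- Duality `⟨Ω̃^i, E_j⟩ = δ_{ij}`: for distinct points `z_1,…,z_N` and
`g_{ij}(z) = ((z - z_j)/(z - z_i)²)·Π_{s≠j}(z - z_s)²/(z_j - z_s)²`,
the total residue `Σ_p res_{z_p}(g_{ij}) = δ_{ij}`. -/
theorem stmt7 {N : ℕ} (z : Fin N → ℂ) (hz : Function.Injective z) (i j : Fin N) :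
    ∑ p : Fin N, res (z p)
      ((RatFunc.X - RatFunc.C (z j)) * ((RatFunc.X - RatFunc.C (z i)) ^ 2)⁻¹ *
        ∏ s ∈ Finset.univ.erase j,
          ((RatFunc.X - RatFunc.C (z s)) ^ 2 * RatFunc.C (((z j - z s) ^ 2)⁻¹)))
      = if i = j then 1 else 0 := by
  classical
  have hX : ∀ a : ℂ, RatFunc.X - RatFunc.C a ≠ 0 := X_sub_C_ne_zero'
  by_cases hij : i = j
  · subst hij
    rw [if_pos rfl]
    set P : Polynomial ℂ :=
      ∏ s ∈ Finset.univ.erase i, ((Polynomial.X - Polynomial.C (z s)) ^ 2 *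
        Polynomial.C (((z i - z s) ^ 2)⁻¹)) with hPdef
    have hmap : algebraMap (Polynomial ℂ) (RatFunc ℂ) P =
        ∏ s ∈ Finset.univ.erase i,
          ((RatFunc.X - RatFunc.C (z s)) ^ 2 * RatFunc.C (((z i - z s) ^ 2)⁻¹)) := by
      rw [hPdef, map_prod]
      refine Finset.prod_congr rfl fun s _ => ?_
      rw [map_mul, map_pow, map_sub, RatFunc.algebraMap_X, RatFunc.algebraMap_C,
        RatFunc.algebraMap_C]
    have heval : P.eval (z i) = 1 := by
      rw [hPdef, Polynomial.eval_prod]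
      refine Finset.prod_eq_one fun s hs => ?_
      have hne : z i - z s ≠ 0 :=
        sub_ne_zero.mpr fun e => (Finset.mem_erase.mp hs).1 (hz e).symm
      simp only [Polynomial.eval_mul, Polynomial.eval_pow, Polynomial.eval_sub,
        Polynomial.eval_X, Polynomial.eval_C]
      field_simp
    obtain ⟨Q, hQ⟩ := Polynomial.X_sub_C_dvd_sub_C_eval (a := z i) (p := P)
    rw [heval] at hQ
    have hE : (RatFunc.X - RatFunc.C (z i)) * ((RatFunc.X - RatFunc.C (z i)) ^ 2)⁻¹ *
        ∏ s ∈ Finset.univ.erase i,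
          ((RatFunc.X - RatFunc.C (z s)) ^ 2 * RatFunc.C (((z i - z s) ^ 2)⁻¹)) =
        algebraMap (Polynomial ℂ) (RatFunc ℂ) Q + (RatFunc.X - RatFunc.C (z i))⁻¹ := by
      rw [← hmap]
      have hP1 : P = (Polynomial.X - Polynomial.C (z i)) * Q + Polynomial.C 1 := by
        linear_combination hQ
      rw [hP1, map_add, map_mul, map_sub, RatFunc.algebraMap_X, RatFunc.algebraMap_C, map_one]
      have h := hX (z i)
      field_simp
      rw [map_one]
    rw [hE]
    exact sum_res_poly_add_inv z hz i Q
  · rw [if_neg hij]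
    have hiu : i ∈ Finset.univ.erase j := Finset.mem_erase.mpr ⟨hij, Finset.mem_univ i⟩
    have hsplit :
        ∏ s ∈ Finset.univ.erase j,
          ((RatFunc.X - RatFunc.C (z s)) ^ 2 * RatFunc.C (((z j - z s) ^ 2)⁻¹)) =
        ((RatFunc.X - RatFunc.C (z i)) ^ 2 * RatFunc.C (((z j - z i) ^ 2)⁻¹)) *
        ∏ s ∈ (Finset.univ.erase j).erase i,
          ((RatFunc.X - RatFunc.C (z s)) ^ 2 * RatFunc.C (((z j - z s) ^ 2)⁻¹)) :=
      (Finset.mul_prod_erase _ _ hiu).symm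
    set R : Polynomial ℂ := (Polynomial.X - Polynomial.C (z j)) *
      Polynomial.C (((z j - z i) ^ 2)⁻¹) *
      ∏ s ∈ (Finset.univ.erase j).erase i, ((Polynomial.X - Polynomial.C (z s)) ^ 2 *
        Polynomial.C (((z j - z s) ^ 2)⁻¹)) with hRdef
    have hmapR : algebraMap (Polynomial ℂ) (RatFunc ℂ) R =
        (RatFunc.X - RatFunc.C (z j)) * RatFunc.C (((z j - z i) ^ 2)⁻¹) *
        ∏ s ∈ (Finset.univ.erase j).erase i,
          ((RatFunc.X - RatFunc.C (z s)) ^ 2 * RatFunc.C (((z j - z s) ^ 2)⁻¹)) := by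
      rw [hRdef, map_mul, map_mul, map_prod, map_sub, RatFunc.algebraMap_X,
        RatFunc.algebraMap_C, RatFunc.algebraMap_C]
      congr 1
      refine Finset.prod_congr rfl fun s _ => ?_
      rw [map_mul, map_pow, map_sub, RatFunc.algebraMap_X, RatFunc.algebraMap_C,
        RatFunc.algebraMap_C]
    have hE : (RatFunc.X - RatFunc.C (z j)) * ((RatFunc.X - RatFunc.C (z i)) ^ 2)⁻¹ *
        ∏ s ∈ Finset.univ.erase j,
          ((RatFunc.X - RatFunc.C (z s)) ^ 2 * RatFunc.C (((z j - z s) ^ 2)⁻¹)) =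
        algebraMap (Polynomial ℂ) (RatFunc ℂ) R := by
      rw [hsplit]
      set Pr : RatFunc ℂ := ∏ s ∈ (Finset.univ.erase j).erase i,
        ((RatFunc.X - RatFunc.C (z s)) ^ 2 * RatFunc.C (((z j - z s) ^ 2)⁻¹)) with hPr
      rw [hmapR]
      have h2 : ((RatFunc.X - RatFunc.C (z i)) ^ 2)⁻¹ * (RatFunc.X - RatFunc.C (z i)) ^ 2 = 1 :=
        inv_mul_cancel₀ (pow_ne_zero 2 (hX (z i)))
      calc (RatFunc.X - RatFunc.C (z j)) * ((RatFunc.X - RatFunc.C (z i)) ^ 2)⁻¹ *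
          ((RatFunc.X - RatFunc.C (z i)) ^ 2 * RatFunc.C (((z j - z i) ^ 2)⁻¹) * Pr)
          = (((RatFunc.X - RatFunc.C (z i)) ^ 2)⁻¹ * (RatFunc.X - RatFunc.C (z i)) ^ 2) *
            ((RatFunc.X - RatFunc.C (z j)) * RatFunc.C (((z j - z i) ^ 2)⁻¹) * Pr) := by ring
        _ = (RatFunc.X - RatFunc.C (z j)) * RatFunc.C (((z j - z i) ^ 2)⁻¹) * Pr := by
            rw [h2, one_mul]
    rw [hE]
    simp [res_algebraMap]
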